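/- Let Y be a real Gaussian random variable with mean μ and standard deviation s > 0, and let T ∈ ℝ. Then the expected improvement E[max(T − Y, 0)] admits the closed form (T − μ)·Φ((T − μ)/s) + s·φ((T − μ)/s), where Φ is the standard normal cumulative distribution function and φ is the standard normal probability density function. -/

import Mathlib

/-!
Write `Y = μ + s Z` with `Z` standard normal and put `c = (T - μ) / s`; then
`max (T - Y) 0 = s * max (c - Z) 0`, so it suffices to treat `Z`. There
`E[max (c - Z) 0] = c Φ(c) - ∫_{x ≤ c} x φ(x) dx`, and since `φ' = -x φ` the last integral
is `-φ(c)`.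
-/

open MeasureTheory ProbabilityTheory Filter Set Topology Real

namespace ProbabilityTheory

lemma gaussianPDFReal_zero_one :
    gaussianPDFReal 0 1 = fun x ↦ (√(2 * π))⁻¹ * rexp (-(x ^ 2 / 2)) := by
  ext x
  simp [gaussianPDFReal, neg_div]

lemma hasDerivAt_gaussianPDFReal_zero_one (x : ℝ) :
    HasDerivAt (gaussianPDFReal 0 1) (-x * gaussianPDFReal 0 1 x) x := by
  have h : HasDerivAt (fun y : ℝ ↦ -(y ^ 2 / 2)) (-(↑2 * x ^ (2 - 1) / 2)) x :=
    ((hasDerivAt_pow 2 x).div_const 2).neg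
  rw [gaussianPDFReal_zero_one]
  exact (h.exp.const_mul _).congr_deriv (by norm_num; ring)

lemma integrable_mul_gaussianPDFReal_zero_one :
    Integrable fun x ↦ x * gaussianPDFReal 0 1 x := by
  refine ((integrable_mul_exp_neg_mul_sq one_half_pos).const_mul (√(2 * π))⁻¹).congr
    (.of_forall fun x ↦ ?_)
  simp only [gaussianPDFReal_zero_one]
  ring_nf

lemma tendsto_gaussianPDFReal_zero_one_atBot :
    Tendsto (gaussianPDFReal 0 1) atBot (𝓝 0) := by
  have hsq : Tendsto (fun x : ℝ ↦ -(x ^ 2 / 2)) atBot atBot := by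
    simp_rw [sq]
    exact tendsto_neg_atTop_atBot.comp
      ((tendsto_id.atBot_mul_atBot₀ tendsto_id).atTop_div_const two_pos)
  rw [gaussianPDFReal_zero_one, ← mul_zero (√(2 * π))⁻¹]
  exact (tendsto_exp_atBot.comp hsq).const_mul _

lemma setIntegral_Iic_mul_gaussianPDFReal_zero_one (c : ℝ) :
    ∫ x in Iic c, x * gaussianPDFReal 0 1 x = -gaussianPDFReal 0 1 c := by
  have hderiv (x : ℝ) : HasDerivAt (-gaussianPDFReal 0 1) (x * gaussianPDFReal 0 1 x) x := by
    simpa using (hasDerivAt_gaussianPDFReal_zero_one x).neg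
  simpa using integral_Iic_of_hasDerivAt_of_tendsto' (fun x _ ↦ hderiv x)
    integrable_mul_gaussianPDFReal_zero_one.integrableOn
    tendsto_gaussianPDFReal_zero_one_atBot.neg

lemma setIntegral_Iic_id_gaussianReal_zero_one (c : ℝ) :
    ∫ x in Iic c, x ∂gaussianReal 0 1 = -gaussianPDFReal 0 1 c := by
  rw [gaussianReal_of_var_ne_zero _ one_ne_zero, setIntegral_withDensity_eq_setIntegral_toReal_smul
    (measurable_gaussianPDF 0 1) (.of_forall fun _ ↦ gaussianPDF_lt_top) _ measurableSet_Iic]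
  simp_rw [toReal_gaussianPDF, smul_eq_mul, mul_comm (gaussianPDFReal 0 1 _)]
  exact setIntegral_Iic_mul_gaussianPDFReal_zero_one c

lemma integral_max_sub_gaussianReal_zero_one (c : ℝ) :
    ∫ x, max (c - x) 0 ∂gaussianReal 0 1
      = c * cdf (gaussianReal 0 1) c + gaussianPDFReal 0 1 c := by
  have hpos : (fun x ↦ max (c - x) 0) = (Iic c).indicator (fun x ↦ c - x) := by
    ext x
    by_cases hx : x ≤ c
    · simp [hx]
    · simp [hx, (not_le.mp hx).le]
  have hid : Integrable (fun x ↦ x) (gaussianReal 0 1) :=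
    (memLp_id_gaussianReal 1).integrable le_rfl
  rw [hpos, integral_indicator measurableSet_Iic,
    integral_sub (integrable_const c) hid.integrableOn, setIntegral_const,
    setIntegral_Iic_id_gaussianReal_zero_one, cdf_eq_real, smul_eq_mul]
  ring

lemma gaussianReal_eq_map_const_add_mul (μ s : ℝ) :
    gaussianReal μ (s ^ 2).toNNReal = (gaussianReal 0 1).map (fun z ↦ μ + s * z) := by
  rw [← Function.comp_def (μ + ·) (s * ·),
    ← Measure.map_map (measurable_const_add μ) (measurable_const_mul s),
    gaussianReal_map_const_mul, gaussianReal_map_const_add]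
  congr 1
  · ring
  · ext; simp [sq_nonneg]

end ProbabilityTheory

theorem expected_improvement_closed_form_general {Ω : Type*} [MeasurableSpace Ω]
    (P : Measure Ω)
    (Y : Ω → ℝ)
    (μ s T : ℝ) (hs : 0 < s)
    (hY : Measure.map Y P = gaussianReal μ (Real.toNNReal (s ^ 2))) :
    ∫ ω, max (T - Y ω) 0 ∂P =
      (T - μ) * cdf (gaussianReal 0 1) ((T - μ) / s)
        + s * gaussianPDFReal 0 1 ((T - μ) / s) := by
  have hYmeas : AEMeasurable Y P := .of_map_ne_zero (by simp [hY, NeZero.ne])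
  have hscale (z : ℝ) : max (T - (μ + s * z)) 0 = s * max ((T - μ) / s - z) 0 := by
    rw [mul_max_of_nonneg _ _ hs.le, mul_zero, mul_sub, mul_div_cancel₀ _ hs.ne']
    ring_nf
  calc ∫ ω, max (T - Y ω) 0 ∂P
      = ∫ x, max (T - x) 0 ∂(gaussianReal 0 1).map (fun z ↦ μ + s * z) := by
        rw [← gaussianReal_eq_map_const_add_mul, ← hY, integral_map hYmeas (by fun_prop)]
    _ = s * ∫ z, max ((T - μ) / s - z) 0 ∂gaussianReal 0 1 := by
        rw [integral_map (by fun_prop) (by fun_prop), ← integral_const_mul]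
        simp_rw [hscale]
    _ = _ := by
        rw [integral_max_sub_gaussianReal_zero_one, mul_add, ← mul_assoc,
          mul_div_cancel₀ _ hs.ne']

/-- Closed form of the Expected Improvement: if `Y` is Gaussian with mean `μ` and
standard deviation `s > 0`, then `E[max (T − Y) 0] = (T − μ)·Φ((T − μ)/s) + s·φ((T − μ)/s)`,
where `Φ` is the standard normal CDF and `φ` the standard normal PDF. -/
theorem expected_improvement_closed_form {Ω : Type*} [MeasurableSpace Ω]
    (P : Measure Ω) [IsProbabilityMeasure P]
    (Y : Ω → ℝ) (hYmeas : Measurable Y)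
    (μ s T : ℝ) (hs : 0 < s)
    (hY : Measure.map Y P = gaussianReal μ (Real.toNNReal (s ^ 2))) :
    ∫ ω, max (T - Y ω) 0 ∂P =
      (T - μ) * cdf (gaussianReal 0 1) ((T - μ) / s)
        + s * gaussianPDFReal 0 1 ((T - μ) / s) :=
  expected_improvement_closed_form_general P Y μ s T hs hY
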